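/- If G is a subgroup of a wreath product A ≀ B = A^n ⋊ B (with B ≤ S_n permuting the n copies of A), where A and B are finite groups, then B(G) ≤ max(B(A), B(B)). -/

import Mathlib

/-- A maximal (unrefinable) chain of subgroups of `G` from `⊤` down to `⊥`: each step is
strict and admits no subgroup strictly in between. -/
def IsMaximalSubgroupChain {G : Type*} [Group G] {n : ℕ} (H : Fin (n + 1) → Subgroup G) : Prop :=
  H 0 = ⊤ ∧ H (Fin.last n) = ⊥ ∧
    ∀ i : Fin n, H i.succ < H i.castSucc ∧
      ∀ K : Subgroup G, ¬(H i.succ < K ∧ K < H i.castSucc)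

/-- The cost of a chain of subgroups: the maximum of the relative indices of its steps. -/
noncomputable def chainCost {G : Type*} [Group G] {n : ℕ} (H : Fin (n + 1) → Subgroup G) : ℕ :=
  Finset.univ.sup fun i : Fin n => (H i.succ).relIndex (H i.castSucc)

/-- The Galois width of a group `G`: the minimum cost over all maximal chains of subgroups. -/
noncomputable def galoisWidth (G : Type*) [Group G] : ℕ :=
  sInf {c : ℕ | ∃ (n : ℕ) (H : Fin (n + 1) → Subgroup G), IsMaximalSubgroupChain H ∧ chainCost H = c}

/-- The action of a permutation group `B ≤ S_n` on `A^n` by permuting the coordinates, used to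
form the wreath product `A ≀ B = Aⁿ ⋊ B`. -/
def wreathAut {n : ℕ} {A : Type*} [Group A] (B : Subgroup (Equiv.Perm (Fin n))) :
    ↥B →* MulAut (Fin n → A) where
  toFun b :=
    { toFun := fun f => f ∘ (b : Equiv.Perm (Fin n)).symm
      invFun := fun f => f ∘ (b : Equiv.Perm (Fin n))
      left_inv := fun f => by ext i; simp
      right_inv := fun f => by ext i; simp
      map_mul' := fun f g => rfl }
  map_one' := by ext f i; rfl
  map_mul' := fun b c => by ext f i; rfl

/-! For finite groups, `galoisWidth Γ ≤ c` as soon as there is *any* descending chain of subgroups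
from `⊤` to `⊥` whose steps have relative index at most `c`: refining a step `L ≤ K` into covering
steps only produces indices dividing `[K : L]`. Such chains pull back along surjections and push
forward along injections without increasing indices, so they glue along an extension
`1 → N → W → Q → 1`, and they restrict to subgroups since `[K ⊓ G : L ⊓ G] ≤ [K : L]`. Apply this to
`Aⁿ ⋊ B`, and inductively to `Aⁿ⁺¹` as an extension of `A` by `Aⁿ`. -/

open Relation Subgroup

section FinChain

variable {α : Type*} {r : α → α → Prop}

theorem Relation.ReflTransGen.exists_fin_chain {a b : α} (h : ReflTransGen r a b) :
    ∃ (m : ℕ) (H : Fin (m + 1) → α), H 0 = a ∧ H (Fin.last m) = b ∧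
      ∀ i : Fin m, r (H i.castSucc) (H i.succ) := by
  induction h using ReflTransGen.head_induction_on with
  | refl => exact ⟨0, fun _ => b, rfl, rfl, Fin.elim0⟩
  | @head a c hac _ ih =>
    obtain ⟨m, H, h0, hlast, hstep⟩ := ih
    refine ⟨m + 1, Fin.cons a H, rfl, by rw [← Fin.succ_last, Fin.cons_succ, hlast], ?_⟩
    intro i
    induction i using Fin.cases with
    | zero => simpa [h0] using hac
    | succ j => simpa [← Fin.succ_castSucc] using hstep j

theorem Relation.reflTransGen_of_fin_chain {m : ℕ} (H : Fin (m + 1) → α)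
    (hstep : ∀ i : Fin m, r (H i.castSucc) (H i.succ)) :
    ReflTransGen r (H 0) (H (Fin.last m)) := by
  suffices ∀ j : Fin (m + 1), ReflTransGen r (H 0) (H j) from this _
  intro j
  induction j using Fin.induction with
  | zero => exact .refl
  | succ j ih => exact ih.tail (hstep j)

end FinChain

section Width

variable {Γ : Type*} [Group Γ]

instance Subgroup.isFiniteRelIndex_of_finite [Finite Γ] (H K : Subgroup Γ) :
    H.IsFiniteRelIndex K :=
  ⟨FiniteIndex.index_ne_zero (H := H.subgroupOf K)⟩

def IndexStep (c : ℕ) (X Y : Subgroup Γ) : Prop :=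
  Y ≤ X ∧ Y.relIndex X ≤ c

def CovStep (c : ℕ) (X Y : Subgroup Γ) : Prop :=
  Y ⋖ X ∧ Y.relIndex X ≤ c

theorem IndexStep.mono {c c' : ℕ} (hc : c ≤ c') {X Y : Subgroup Γ} (h : IndexStep c X Y) :
    IndexStep c' X Y :=
  ⟨h.1, h.2.trans hc⟩

theorem IndexStep.reflTransGen_covStep [Finite Γ] {c : ℕ} {K L : Subgroup Γ}
    (h : IndexStep c K L) : ReflTransGen (CovStep c) K L := by
  have : Finite (Subgroup Γ) := Finite.of_injective _ SetLike.coe_injective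
  induction K using WellFoundedLT.induction with
  | _ K ih =>
  obtain ⟨hLK, hc⟩ := h
  rcases hLK.eq_or_lt with rfl | hlt
  · exact .refl
  obtain ⟨M, hLM, hMK⟩ := exists_le_covBy_of_lt hlt
  have hLK0 : L.relIndex K ≠ 0 := relIndex_ne_zero
  have hMK_le : M.relIndex K ≤ c := (relIndex_le_of_le_left hLM hLK0).trans hc
  have hLM_le : L.relIndex M ≤ c := (relIndex_le_of_le_right hMK.le hLK0).trans hc
  exact .head ⟨hMK, hMK_le⟩ (ih M hMK.lt ⟨hLM, hLM_le⟩)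

theorem exists_isMaximalSubgroupChain_chainCost_le [Finite Γ] {c : ℕ}
    (h : ReflTransGen (IndexStep c) (⊤ : Subgroup Γ) ⊥) :
    ∃ (m : ℕ) (H : Fin (m + 1) → Subgroup Γ),
      IsMaximalSubgroupChain H ∧ chainCost H ≤ c := by
  obtain ⟨m, H, h0, hlast, hstep⟩ :=
    (reflTransGen_closed (fun _ _ hXY => hXY.reflTransGen_covStep) _ _ h).exists_fin_chain
  have hcov : ∀ i : Fin m, H i.succ ⋖ H i.castSucc := fun i => (hstep i).1
  exact ⟨m, H, ⟨h0, hlast, fun i => ⟨(hcov i).lt, fun K hK => (hcov i).2 hK.1 hK.2⟩⟩,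
    Finset.sup_le fun i _ => (hstep i).2⟩

theorem relIndex_le_chainCost {m : ℕ} (H : Fin (m + 1) → Subgroup Γ) (i : Fin m) :
    (H i.succ).relIndex (H i.castSucc) ≤ chainCost H :=
  Finset.le_sup (f := fun i : Fin m => (H i.succ).relIndex (H i.castSucc)) (Finset.mem_univ i)

theorem IsMaximalSubgroupChain.reflTransGen_indexStep {m : ℕ} {H : Fin (m + 1) → Subgroup Γ}
    (hH : IsMaximalSubgroupChain H) :
    ReflTransGen (IndexStep (chainCost H)) (⊤ : Subgroup Γ) ⊥ := by
  obtain ⟨h0, hlast, hstep⟩ := hH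
  rw [← h0, ← hlast]
  exact reflTransGen_of_fin_chain (r := IndexStep (chainCost H)) H fun i =>
    ⟨(hstep i).1.le, relIndex_le_chainCost H i⟩

theorem exists_isMaximalSubgroupChain_chainCost_eq_galoisWidth [Finite Γ] :
    ∃ (m : ℕ) (H : Fin (m + 1) → Subgroup Γ),
      IsMaximalSubgroupChain H ∧ chainCost H = galoisWidth Γ := by
  have hsingle : IndexStep ((⊥ : Subgroup Γ).relIndex ⊤) ⊤ ⊥ := ⟨bot_le, le_rfl⟩
  obtain ⟨m, H, hH, -⟩ := exists_isMaximalSubgroupChain_chainCost_le (.single hsingle)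
  exact Nat.sInf_mem (s := {c | ∃ (n : ℕ) (H : Fin (n + 1) → Subgroup Γ),
    IsMaximalSubgroupChain H ∧ chainCost H = c}) ⟨_, m, H, hH, rfl⟩

theorem galoisWidth_le_iff [Finite Γ] {c : ℕ} :
    galoisWidth Γ ≤ c ↔ ReflTransGen (IndexStep c) (⊤ : Subgroup Γ) ⊥ := by
  refine ⟨fun hc => ?_, fun h => ?_⟩
  · obtain ⟨m, H, hH, hcost⟩ :=
      exists_isMaximalSubgroupChain_chainCost_eq_galoisWidth (Γ := Γ)
    exact ReflTransGen.mono (fun _ _ => IndexStep.mono (hcost ▸ hc)) _ _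
      hH.reflTransGen_indexStep
  · obtain ⟨m, H, hH, hcost⟩ := exists_isMaximalSubgroupChain_chainCost_le h
    exact le_trans (Nat.sInf_le ⟨m, H, hH, rfl⟩) hcost

end Width

section Transfer

variable {N W Q : Type*} [Group N] [Group W] [Group Q] {c : ℕ}

theorem IndexStep.comap [Finite Q] (f : W →* Q) {X Y : Subgroup Q} (h : IndexStep c X Y) :
    IndexStep c (X.comap f) (Y.comap f) := by
  refine ⟨comap_mono h.1, ?_⟩
  rw [relIndex_comap]
  exact (relIndex_le_of_le_right (map_comap_le f X) relIndex_ne_zero).trans h.2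

theorem IndexStep.map_of_injective {f : N →* W} (hf : Function.Injective f) {X Y : Subgroup N}
    (h : IndexStep c X Y) : IndexStep c (X.map f) (Y.map f) :=
  ⟨map_mono h.1, (relIndex_map_map_of_injective Y X hf).le.trans h.2⟩

theorem galoisWidth_subgroup_le [Finite W] (G : Subgroup W) :
    galoisWidth G ≤ galoisWidth W := by
  have h := ReflTransGen.lift (comap G.subtype) (fun _ _ hXY => hXY.comap G.subtype) _ _
    (galoisWidth_le_iff.1 le_rfl : ReflTransGen (IndexStep (galoisWidth W)) (⊤ : Subgroup W) ⊥)
  rw [Function.onFun, comap_top, MonoidHom.comap_bot, ker_subtype] at h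
  exact galoisWidth_le_iff.2 h

theorem galoisWidth_le_max_of_range_eq_ker [Finite W] {g : N →* W} {f : W →* Q}
    (hg : Function.Injective g) (hf : Function.Surjective f) (hgf : g.range = f.ker) :
    galoisWidth W ≤ max (galoisWidth N) (galoisWidth Q) := by
  have : Finite N := Finite.of_injective g hg
  have : Finite Q := Finite.of_surjective f hf
  have upper := ReflTransGen.lift (comap f) (fun _ _ hXY => hXY.comap f) _ _
    (galoisWidth_le_iff.1 (le_max_right (galoisWidth N) (galoisWidth Q)))
  have lower := ReflTransGen.lift (map g) (fun _ _ hXY => hXY.map_of_injective hg) _ _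
    (galoisWidth_le_iff.1 (le_max_left (galoisWidth N) (galoisWidth Q)))
  rw [Function.onFun, comap_top, MonoidHom.comap_bot] at upper
  rw [Function.onFun, ← MonoidHom.range_eq_map, Subgroup.map_bot, hgf] at lower
  exact galoisWidth_le_iff.2 (upper.trans lower)

end Transfer

def Fin.consOneHom (n : ℕ) (A : Type*) [Group A] : (Fin n → A) →* (Fin (n + 1) → A) where
  toFun x := Fin.cons (1 : A) x
  map_one' := by ext i; cases i using Fin.cases <;> simp
  map_mul' x y := by ext i; cases i using Fin.cases <;> simp

theorem Fin.range_consOneHom {A : Type*} [Group A] (n : ℕ) :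
    (Fin.consOneHom n A).range = (Pi.evalMonoidHom (fun _ : Fin (n + 1) => A) 0).ker := by
  ext x
  refine ⟨?_, fun hx => ⟨Fin.tail x, ?_⟩⟩
  · rintro ⟨y, rfl⟩
    rfl
  · rw [MonoidHom.mem_ker, Pi.evalMonoidHom_apply] at hx
    conv_rhs => rw [← Fin.cons_self_tail x, hx]
    rfl

theorem galoisWidth_pi_le {A : Type*} [Group A] [Finite A] (n : ℕ) :
    galoisWidth (Fin n → A) ≤ galoisWidth A := by
  induction n with
  | zero =>
    rw [galoisWidth_le_iff, eq_bot_of_subsingleton ⊤]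
  | succ n ih =>
    calc galoisWidth (Fin (n + 1) → A)
        ≤ max (galoisWidth (Fin n → A)) (galoisWidth A) :=
          galoisWidth_le_max_of_range_eq_ker (Fin.cons_right_injective (α := fun _ => A) 1)
            (fun a => ⟨fun _ => a, rfl⟩) (Fin.range_consOneHom n)
      _ ≤ galoisWidth A := max_le ih le_rfl

instance SemidirectProduct.finite {N G : Type*} [Group N] [Group G] {φ : G →* MulAut N}
    [Finite N] [Finite G] : Finite (N ⋊[φ] G) :=
  Finite.of_injective (fun x => (x.left, x.right))
    fun _ _ h => SemidirectProduct.ext (congrArg Prod.fst h) (congrArg Prod.snd h)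

/-- If `G` is a subgroup of a wreath product `A ≀ B = Aⁿ ⋊ B` (with
`B ≤ S_n` permuting the `n` copies of the finite group `A`), then
`B(G) ≤ max (B(A)) (B(B))`. -/
theorem stmt19 (n : ℕ) (A : Type*) [Group A] [Finite A] (B : Subgroup (Equiv.Perm (Fin n)))
    (G : Subgroup ((Fin n → A) ⋊[wreathAut B] ↥B)) :
    galoisWidth ↥G ≤ max (galoisWidth A) (galoisWidth ↥B) :=
  calc galoisWidth G
      ≤ galoisWidth ((Fin n → A) ⋊[wreathAut B] ↥B) := galoisWidth_subgroup_le G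
    _ ≤ max (galoisWidth (Fin n → A)) (galoisWidth B) :=
        galoisWidth_le_max_of_range_eq_ker SemidirectProduct.inl_injective
          SemidirectProduct.rightHom_surjective SemidirectProduct.range_inl_eq_ker_rightHom
    _ ≤ max (galoisWidth A) (galoisWidth B) := max_le_max_right _ (galoisWidth_pi_le n)
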